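/- Let q be an element of a commutative ring and write D'_{n,k}(q) = Σ_{(σ,S)∈𝔖^{>'}_{n,k}} q^{inv'((σ,S))}, with the conventions D'_{m,−1}(q) = 0 and D'_{m,k}(q) = 0 for k > m. Then for all n ≥ 2 and 0 ≤ k ≤ n, D'_{n,k}(q) = [n−k+1]_q · D'_{n−1,k−1}(q) + [n−k]_q · D'_{n−1,k}(q). -/

import Mathlib

open Finset

/-- One-line notation: `oneline σ i` is the value σ_i ∈ {1,…,n} at position i ∈ {1,…,n}. -/
def oneline {n : ℕ} (σ : Equiv.Perm (Fin n)) (i : ℕ) : ℕ :=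
  if h : 1 ≤ i ∧ i ≤ n then (σ ⟨i - 1, by omega⟩ : ℕ) + 1 else 0

/-- The descent set Des(σ) = {i ∈ {1,…,n−1} : σ_i > σ_{i+1}}. -/
def DesSet {n : ℕ} (σ : Equiv.Perm (Fin n)) : Finset ℕ :=
  (Finset.Icc 1 (n - 1)).filter fun i => oneline σ (i + 1) < oneline σ i

/-- The ascent set Asc(σ) = {i ∈ {1,…,n−1} : σ_i < σ_{i+1}}. -/
def AscSet {n : ℕ} (σ : Equiv.Perm (Fin n)) : Finset ℕ :=
  (Finset.Icc 1 (n - 1)).filter fun i => oneline σ i < oneline σ (i + 1)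

/-- maj(σ) = Σ_{i ∈ Des(σ)} i. -/
def majNum {n : ℕ} (σ : Equiv.Perm (Fin n)) : ℕ := ∑ i ∈ DesSet σ, i

/-- des(σ) = |Des(σ)|. -/
def desNum {n : ℕ} (σ : Equiv.Perm (Fin n)) : ℕ := (DesSet σ).card

/-- inv(σ) = #{(i,j) : 1 ≤ i < j ≤ n, σ_i > σ_j}. -/
def invNum {n : ℕ} (σ : Equiv.Perm (Fin n)) : ℕ :=
  ((Finset.Icc 1 n ×ˢ Finset.Icc 1 n).filter fun p =>
    p.1 < p.2 ∧ oneline σ p.2 < oneline σ p.1).card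

/-- coinv(σ) = #{(i,j) : 1 ≤ i < j ≤ n, σ_i < σ_j}. -/
def coinvNum {n : ℕ} (σ : Equiv.Perm (Fin n)) : ℕ :=
  ((Finset.Icc 1 n ×ˢ Finset.Icc 1 n).filter fun p =>
    p.1 < p.2 ∧ oneline σ p.1 < oneline σ p.2).card

/-- inv^{□,j}(σ) = #{i : 1 ≤ i < j, σ_i > σ_j}, inversions ending at position j. -/
def invEnd {n : ℕ} (σ : Equiv.Perm (Fin n)) (j : ℕ) : ℕ :=
  ((Finset.Icc 1 n).filter fun i => i < j ∧ oneline σ j < oneline σ i).card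

/-- inv^{i,□}(σ) = #{j : i < j ≤ n, σ_i > σ_j}, inversions starting at position i. -/
def invStart {n : ℕ} (σ : Equiv.Perm (Fin n)) (i : ℕ) : ℕ :=
  ((Finset.Icc 1 n).filter fun j => i < j ∧ oneline σ j < oneline σ i).card

/-- [m]_q = 1 + q + ⋯ + q^{m−1}. -/
def qnum {R : Type*} [CommRing R] (q : R) (m : ℕ) : R := ∑ i ∈ Finset.range m, q ^ i

/-- [m]_q! = [1]_q [2]_q ⋯ [m]_q, with [0]_q! = 1. -/
def qfact {R : Type*} [CommRing R] (q : R) (m : ℕ) : R := ∏ i ∈ Finset.range m, qnum q (i + 1)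

/-- q-Stirling numbers: S_{0,0}(q)=1, S_{n,k}(q)=0 for k<0 or k>n, and
S_{n+1,k}(q) = S_{n,k−1}(q) + [k]_q S_{n,k}(q). -/
def qStirling {R : Type*} [CommRing R] (q : R) : ℕ → ℕ → R
  | 0, 0 => 1
  | 0, _ + 1 => 0
  | _ + 1, 0 => 0
  | n + 1, k + 1 => qStirling q n k + qnum q (k + 1) * qStirling q n (k + 1)

/-- The set of star-sets of size k inside a given finite set (e.g. the descent set). -/
def starSets (D : Finset ℕ) (k : ℕ) : Finset (Finset ℕ) :=
  D.powerset.filter fun S => S.card = k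

/-- inv((σ,S)) = inv(σ) − Σ_{i∈S} (1 + inv^{□,i}(σ)) for a descent-starred permutation. -/
def starInv {n : ℕ} (σ : Equiv.Perm (Fin n)) (S : Finset ℕ) : ℕ :=
  invNum σ - ∑ i ∈ S, (1 + invEnd σ i)

/-- maj((σ,S)) = maj(σ) − Σ_{i∈S} |Des(σ) ∩ {i,…,n−1}| for a descent-starred permutation. -/
def starMaj {n : ℕ} (σ : Equiv.Perm (Fin n)) (S : Finset ℕ) : ℕ :=
  majNum σ - ∑ i ∈ S, (DesSet σ ∩ Finset.Icc i (n - 1)).card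

/-- Gaussian binomial coefficients: binom_q(m,0)=1, binom_q(m,r)=0 for r>m, and
binom_q(m,r) = binom_q(m−1,r−1) + q^r · binom_q(m−1,r). -/
def qbinom {R : Type*} [CommRing R] (q : R) : ℕ → ℕ → R
  | _, 0 => 1
  | 0, _ + 1 => 0
  | m + 1, r + 1 => qbinom q m r + q ^ (r + 1) * qbinom q m (r + 1)

/-- A_{n,j}(q) = Σ_{σ ∈ 𝔖_n, des(σ)=j} q^{maj(σ)}. -/
def eulerA {R : Type*} [CommRing R] (q : R) (n j : ℕ) : R :=
  ∑ σ ∈ (Finset.univ : Finset (Equiv.Perm (Fin n))).filter (fun σ => desNum σ = j),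
    q ^ majNum σ

/-- [m]_{p,q} = p^{m−1} + p^{m−2} q + ⋯ + p q^{m−2} + q^{m−1}. -/
def pqnum {R : Type*} [CommRing R] (p q : R) (m : ℕ) : R :=
  ∑ i ∈ Finset.range m, p ^ (m - 1 - i) * q ^ i

/-- [m]_{p,q}! = [1]_{p,q} [2]_{p,q} ⋯ [m]_{p,q}. -/
def pqfact {R : Type*} [CommRing R] (p q : R) (m : ℕ) : R :=
  ∏ i ∈ Finset.range m, pqnum p q (i + 1)

/-- p,q-Stirling numbers: S_{0,0}(p,q)=1, S_{n,k}(p,q)=0 for k<0 or k>n, and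
S_{n+1,k}(p,q) = S_{n,k−1}(p,q) + [k]_{p,q} S_{n,k}(p,q). -/
def pqStirling {R : Type*} [CommRing R] (p q : R) : ℕ → ℕ → R
  | 0, 0 => 1
  | 0, _ + 1 => 0
  | _ + 1, 0 => 0
  | n + 1, k + 1 => pqStirling p q n k + pqnum p q (k + 1) * pqStirling p q n (k + 1)

/-- D'_{n,k}(q) = Σ_{(σ,S)∈𝔖^{>'}_{n,k}} q^{inv'((σ,S))}, where
𝔖^{>'}_{n,k} = {(σ,S) : σ ∈ 𝔖_n, S ⊆ Des(σ) ∪ {n}, |S| = k} and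
inv'((σ,S)) = inv(σ) − Σ_{i∈S} inv^{□,i}(σ).  (It vanishes for k > n automatically.) -/
def Dinv' {R : Type*} [CommRing R] (q : R) (n k : ℕ) : R :=
  ∑ σ : Equiv.Perm (Fin n), ∑ S ∈ starSets (insert n (DesSet σ)) k,
    q ^ (invNum σ - ∑ i ∈ S, invEnd σ i)


/-!
Every `σ ∈ 𝔖_{m+1}` arises exactly once by inserting the letter `m + 1` at some position `p + 1`
of some `τ ∈ 𝔖_m`. The admissible star positions `Des(σ) ∪ {m+1}` of `σ` are `p + 1` together
with the shifted positions of `(Des(τ) ∪ {m}) \ {p}`. Starring `p + 1` costs nothing, so a starred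
`(σ, S)` comes either from some `(τ, T)` with `|T| = |S| - 1` or from some `(τ, T)` with
`|T| = |S|`, and in both cases `inv'` grows by the number of unstarred positions of `τ` after `p`.
For a fixed `(τ, T)`, as `p` runs over `{0, …, m} \ T`, this number takes each
value `0, …, m - |T|` once, which produces the factor `[m + 1 - |T|]_q`.
-/

section oneline

variable {n : ℕ} (σ : Equiv.Perm (Fin n))

lemma oneline_le (i : ℕ) : oneline σ i ≤ n := by
  unfold oneline; split_ifs with h
  · have := (σ ⟨i - 1, by omega⟩).isLt; omega
  · omega

lemma oneline_pos {i : ℕ} (h1 : 1 ≤ i) (h2 : i ≤ n) : 0 < oneline σ i := by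
  simp [oneline, h1, h2]

lemma oneline_eq_zero {i : ℕ} (h : ¬(1 ≤ i ∧ i ≤ n)) : oneline σ i = 0 := by
  simp [oneline, h]

lemma invNum_eq_sum_invEnd : invNum σ = ∑ j ∈ Icc 1 n, invEnd σ j := by
  simp only [invNum, invEnd, card_filter, sum_product_right]

lemma insert_DesSet_eq_filter (hn : 1 ≤ n) :
    insert n (DesSet σ) = (Icc 1 n).filter fun i => oneline σ (i + 1) < oneline σ i := by
  have hlast : oneline σ (n + 1) < oneline σ n := by
    rw [oneline_eq_zero σ (by omega)]; exact oneline_pos σ hn le_rfl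
  ext i
  simp only [DesSet, mem_insert, mem_filter, mem_Icc]
  constructor
  · rintro (rfl | ⟨hi, hd⟩)
    · exact ⟨⟨hn, le_rfl⟩, hlast⟩
    · exact ⟨by omega, hd⟩
  · rintro ⟨hi, hd⟩
    by_cases hin : i = n
    · exact Or.inl hin
    · exact Or.inr ⟨by omega, hd⟩

lemma insert_DesSet_subset_Icc (hn : 1 ≤ n) : insert n (DesSet σ) ⊆ Icc 1 n := by
  rw [insert_DesSet_eq_filter σ hn]; exact filter_subset _ _

end oneline

/-- The statistic `inv'((σ,S))`. -/
def invPrime {n : ℕ} (σ : Equiv.Perm (Fin n)) (S : Finset ℕ) : ℕ :=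
  invNum σ - ∑ i ∈ S, invEnd σ i

lemma Dinv'_eq_sum_invPrime {R : Type*} [CommRing R] (q : R) (n k : ℕ) :
    Dinv' q n k = ∑ σ : Equiv.Perm (Fin n),
      ∑ S ∈ powersetCard k (insert n (DesSet σ)), q ^ invPrime σ S := by
  simp only [Dinv', starSets, ← powersetCard_eq_filter, invPrime]

lemma sum_powersetCard_succ_insert {α M : Type*} [DecidableEq α] [AddCommMonoid M] {a : α}
    {s : Finset α} (ha : a ∉ s) (k : ℕ) (f : Finset α → M) :
    ∑ S ∈ powersetCard (k + 1) (insert a s), f S =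
      ∑ T ∈ powersetCard k s, f (insert a T) + ∑ T ∈ powersetCard (k + 1) s, f T := by
  have hnotin : ∀ T ∈ powersetCard k s, a ∉ T := fun T hT h => ha ((mem_powersetCard.1 hT).1 h)
  rw [powersetCard_succ_insert ha, sum_union, sum_image, add_comm]
  · intro T hT T' hT' h
    rw [← erase_insert (hnotin T hT), ← erase_insert (hnotin T' hT')]
    exact congrArg (·.erase a) h
  · refine disjoint_left.2 fun S hS hS' => ?_
    obtain ⟨T, -, rfl⟩ := mem_image.1 hS'
    exact ha ((mem_powersetCard.1 hS).1 (mem_insert_self a T))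

section qCount

variable {R : Type*} [CommRing R] (q : R)

lemma sum_pow_card_filter_lt {α : Type*} [LinearOrder α] (T : Finset α) :
    ∑ t ∈ T, q ^ #(T.filter (t < ·)) = qnum q #T := by
  induction T using Finset.induction_on_max with
  | empty => simp [qnum]
  | insert a s hlt ih =>
    have ha : a ∉ s := fun h => lt_irrefl a (hlt a h)
    have htop : (insert a s).filter (a < ·) = ∅ :=
      filter_eq_empty_iff.2 fun x hx => by
        rcases mem_insert.1 hx with rfl | hx
        · exact lt_irrefl x
        · exact (hlt x hx).not_gt
    have hbelow : ∀ t ∈ s, #((insert a s).filter (t < ·)) = #(s.filter (t < ·)) + 1 := by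
      intro t ht
      rw [filter_insert, if_pos (hlt t ht), card_insert_of_notMem (fun h => ha (mem_filter.1 h).1)]
    rw [sum_insert ha, card_insert_of_notMem ha, qnum, geom_sum_succ, ← qnum, ← ih, mul_sum,
      htop, sum_congr rfl fun t ht => by rw [hbelow t ht, pow_succ'], card_empty, pow_zero,
      add_comm]

lemma sum_range_sdiff_pow_card_Ioc_sdiff {m : ℕ} {S : Finset ℕ} (hS : S ⊆ range (m + 1)) :
    ∑ p ∈ range (m + 1) \ S, q ^ #(Ioc p m \ S) = qnum q (m + 1 - #S) := by
  have hcard : #(range (m + 1) \ S) = m + 1 - #S := by rw [card_sdiff_of_subset hS, card_range]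
  rw [← hcard, ← sum_pow_card_filter_lt]
  refine sum_congr rfl fun p _ => ?_
  congr 2
  ext x
  by_cases hx : x ∈ S
  · simp [hx]
  · simp [hx]; omega

lemma sum_fin_sum_powersetCard_erase {m j : ℕ} {B : Finset ℕ} (hB : B ⊆ range (m + 1))
    (e : Finset ℕ → ℕ) :
    ∑ p : Fin (m + 1), ∑ S ∈ powersetCard j (B.erase p), q ^ (e S + #(Ioc (p : ℕ) m \ S)) =
      qnum q (m + 1 - j) * ∑ S ∈ powersetCard j B, q ^ e S := by
  have herase : ∀ p : ℕ, powersetCard j (B.erase p) = (powersetCard j B).filter (p ∉ ·) := by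
    intro p; ext S; simp only [mem_powersetCard, mem_filter, subset_erase]; tauto
  simp_rw [herase, sum_filter]
  rw [sum_comm, mul_sum]
  refine sum_congr rfl fun S hS => ?_
  obtain ⟨hSB, rfl⟩ := mem_powersetCard.mp hS
  rw [← sum_range_sdiff_pow_card_Ioc_sdiff q (hSB.trans hB), sdiff_eq_filter, sum_filter,
    ← Fin.sum_univ_eq_sum_range (fun p => if p ∉ S then q ^ #(Ioc p m \ S) else 0), mul_comm,
    mul_sum]
  simp only [pow_add, mul_ite, mul_zero]

end qCount

/-- Insert the letter `m + 1` at position `p + 1` of the one-line notation of `τ`. -/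
def insertMax {m : ℕ} (τ : Equiv.Perm (Fin m)) (p : Fin (m + 1)) : Equiv.Perm (Fin (m + 1)) :=
  (finSuccEquiv' p).trans ((Equiv.optionCongr τ).trans (finSuccEquiv' (Fin.last m)).symm)

/-- Position `i` of `τ` is position `shiftUp p i` of `insertMax τ p`. -/
def shiftUp (p : ℕ) : ℕ ↪ ℕ where
  toFun i := if p < i then i + 1 else i
  inj' a b h := by dsimp only at h; split_ifs at h <;> omega

section shiftUp

variable {p i j : ℕ}

lemma shiftUp_apply : shiftUp p i = if p < i then i + 1 else i := rfl

lemma shiftUp_ne_succ : shiftUp p i ≠ p + 1 := by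
  rw [shiftUp_apply]; split_ifs <;> omega

lemma succ_notMem_map_shiftUp (s : Finset ℕ) : p + 1 ∉ s.map (shiftUp p) := by
  simp only [mem_map, not_exists, not_and]
  exact fun _ _ => shiftUp_ne_succ

lemma shiftUp_lt_shiftUp_iff : shiftUp p i < shiftUp p j ↔ i < j := by
  simp only [shiftUp_apply]; split_ifs <;> omega

lemma succ_lt_shiftUp_iff : p + 1 < shiftUp p i ↔ p < i := by
  rw [shiftUp_apply]; split_ifs <;> omega

lemma shiftUp_succ (h : i ≠ p) : shiftUp p (i + 1) = shiftUp p i + 1 := by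
  simp only [shiftUp_apply]; split_ifs <;> omega

lemma Icc_succ_eq_insert_map_shiftUp {m : ℕ} (hp : p ≤ m) :
    Icc 1 (m + 1) = insert (p + 1) ((Icc 1 m).map (shiftUp p)) := by
  ext x
  simp only [mem_Icc, mem_insert, mem_map, shiftUp_apply]
  constructor
  · intro hx
    by_cases hxp : x = p + 1
    · exact Or.inl hxp
    · refine Or.inr (if h : p + 1 < x then ⟨x - 1, ?_⟩ else ⟨x, ?_⟩) <;> split_ifs <;> omega
  · rintro (rfl | ⟨y, hy, rfl⟩)
    · omega
    · split_ifs <;> omega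

end shiftUp

section insertMax

variable {m : ℕ} (τ : Equiv.Perm (Fin m)) (p : Fin (m + 1))

lemma insertMax_apply_self : insertMax τ p p = Fin.last m := by
  simp [insertMax, finSuccEquiv'_at]

lemma insertMax_apply_succAbove (j : Fin m) :
    insertMax τ p (p.succAbove j) = (τ j).castSucc := by
  simp [insertMax, finSuccEquiv'_succAbove, finSuccEquiv'_symm_some, Fin.succAbove_last]

lemma insertMax_bijective :
    Function.Bijective fun x : Fin (m + 1) × Equiv.Perm (Fin m) => insertMax x.2 x.1 := by
  refine (Fintype.bijective_iff_injective_and_card _).2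
    ⟨?_, by simp [Fintype.card_perm, Nat.factorial_succ]⟩
  rintro ⟨p₁, τ₁⟩ ⟨p₂, τ₂⟩ h
  dsimp only at h
  obtain rfl : p₁ = p₂ := (insertMax τ₂ p₂).injective <| by
    rw [← h, insertMax_apply_self, h, insertMax_apply_self]
  obtain rfl : τ₁ = τ₂ := Equiv.ext fun j => Fin.castSucc_injective m <| by
    rw [← insertMax_apply_succAbove, ← insertMax_apply_succAbove, h]
  rfl

lemma oneline_insertMax_succ : oneline (insertMax τ p) (p + 1) = m + 1 := by
  simp [oneline, insertMax_apply_self, Nat.lt_succ_iff.mp p.isLt]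

lemma oneline_insertMax_shiftUp (i : ℕ) :
    oneline (insertMax τ p) (shiftUp p i) = oneline τ i := by
  by_cases hi : 1 ≤ i ∧ i ≤ m
  · have hpos : shiftUp (p : ℕ) i - 1 = (p.succAbove ⟨i - 1, by omega⟩ : ℕ) := by
      rw [shiftUp_apply, Fin.succAbove]
      split_ifs <;> simp_all [Fin.lt_def] <;> omega
    have hle : 1 ≤ shiftUp (p : ℕ) i ∧ shiftUp (p : ℕ) i ≤ m + 1 := by
      rw [shiftUp_apply]; split_ifs <;> omega
    simp only [oneline, dif_pos hi, dif_pos hle, hpos, Fin.eta, insertMax_apply_succAbove,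
      Fin.val_castSucc]
  · rw [oneline_eq_zero _ hi, oneline_eq_zero]
    rw [shiftUp_apply]; split_ifs <;> omega

lemma invEnd_insertMax_succ : invEnd (insertMax τ p) (p + 1) = 0 := by
  simp only [invEnd, oneline_insertMax_succ, card_eq_zero, filter_eq_empty_iff]
  exact fun i _ h => (oneline_le _ i).not_gt h.2

lemma invEnd_insertMax_shiftUp (i : ℕ) :
    invEnd (insertMax τ p) (shiftUp p i) = invEnd τ i + if (p : ℕ) < i then 1 else 0 := by
  have hmax : oneline τ i < m + 1 := Nat.lt_succ_of_le (oneline_le τ i)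
  rw [invEnd, Icc_succ_eq_insert_map_shiftUp (Nat.lt_succ_iff.mp p.isLt), filter_insert,
    filter_map]
  simp only [Function.comp_def, shiftUp_lt_shiftUp_iff, oneline_insertMax_shiftUp,
    oneline_insertMax_succ, succ_lt_shiftUp_iff, hmax, and_true]
  split_ifs
  · rw [card_insert_of_notMem (succ_notMem_map_shiftUp _), card_map, invEnd]
  · rw [card_map, invEnd, add_zero]

lemma invNum_insertMax : invNum (insertMax τ p) = invNum τ + (m - p) := by
  rw [invNum_eq_sum_invEnd, Icc_succ_eq_insert_map_shiftUp (Nat.lt_succ_iff.mp p.isLt),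
    sum_insert (succ_notMem_map_shiftUp _), sum_map, invEnd_insertMax_succ, zero_add]
  simp only [invEnd_insertMax_shiftUp, sum_add_distrib, ← invNum_eq_sum_invEnd, sum_boole,
    Nat.cast_id]
  congr
  rw [← Nat.card_Ioc]
  congr 1
  ext; simp; omega

lemma insert_DesSet_insertMax (hm : 1 ≤ m) :
    insert (m + 1) (DesSet (insertMax τ p)) =
      insert ((p : ℕ) + 1) (((insert m (DesSet τ)).erase p).map (shiftUp p)) := by
  have hpeak : oneline (insertMax τ p) (p + 1 + 1) < oneline (insertMax τ p) (p + 1) := by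
    have hnext : shiftUp (p : ℕ) (p + 1) = p + 1 + 1 := by simp [shiftUp_apply]
    rw [oneline_insertMax_succ, ← hnext, oneline_insertMax_shiftUp]
    exact Nat.lt_succ_of_le (oneline_le τ _)
  rw [insert_DesSet_eq_filter _ (by omega), insert_DesSet_eq_filter _ hm,
    Icc_succ_eq_insert_map_shiftUp (Nat.lt_succ_iff.mp p.isLt), filter_insert, filter_map,
    if_pos hpeak]
  congr 2
  ext i
  simp only [mem_filter, mem_erase, Function.comp_apply]
  by_cases hip : i = p
  · have hp : shiftUp (p : ℕ) p = p := by simp [shiftUp_apply]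
    simp only [hip, hp, oneline_insertMax_succ, ne_eq, not_true_eq_false, false_and, iff_false]
    exact fun h => (oneline_le _ _).not_gt h.2
  · rw [← shiftUp_succ hip, oneline_insertMax_shiftUp, oneline_insertMax_shiftUp]
    simp [hip]

variable {S : Finset ℕ}

lemma invPrime_insertMax_map (hS : S ⊆ Icc 1 m) :
    invPrime (insertMax τ p) (S.map (shiftUp p)) = invPrime τ S + #(Ioc (p : ℕ) m \ S) := by
  have hle : ∑ i ∈ S, invEnd τ i ≤ invNum τ := by
    rw [invNum_eq_sum_invEnd]; exact sum_le_sum_of_subset hS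
  have hlater : #(S.filter ((p : ℕ) < ·)) + #(Ioc (p : ℕ) m \ S) = m - p := by
    have hinter : Ioc (p : ℕ) m ∩ S = S.filter ((p : ℕ) < ·) := by
      ext i
      have := @hS i
      simp only [mem_inter, mem_Ioc, mem_filter, mem_Icc] at this ⊢
      tauto
    rw [← Nat.card_Ioc, ← card_sdiff_add_card_inter (Ioc (p : ℕ) m) S, hinter, add_comm]
  simp only [invPrime, invNum_insertMax, sum_map, invEnd_insertMax_shiftUp, sum_add_distrib,
    sum_boole, Nat.cast_id]
  omega

lemma invPrime_insertMax_insert_map (hS : S ⊆ Icc 1 m) :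
    invPrime (insertMax τ p) (insert ((p : ℕ) + 1) (S.map (shiftUp p))) =
      invPrime τ S + #(Ioc (p : ℕ) m \ S) := by
  rw [← invPrime_insertMax_map τ p hS, invPrime, invPrime,
    sum_insert (succ_notMem_map_shiftUp _), invEnd_insertMax_succ, zero_add]

end insertMax

section recursion

variable {R : Type*} [CommRing R] (q : R) {m : ℕ}

lemma Dinv'_succ_eq_sum_insertMax (k : ℕ) :
    Dinv' q (m + 1) k = ∑ τ : Equiv.Perm (Fin m), ∑ p : Fin (m + 1),
      ∑ S ∈ powersetCard k (insert (m + 1) (DesSet (insertMax τ p))),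
        q ^ invPrime (insertMax τ p) S := by
  rw [Dinv'_eq_sum_invPrime, ← insertMax_bijective.sum_comp, Fintype.sum_prod_type, sum_comm]

lemma sum_powersetCard_insertMax_succ (hm : 1 ≤ m) (τ : Equiv.Perm (Fin m)) (p : Fin (m + 1))
    (k : ℕ) :
    ∑ S ∈ powersetCard (k + 1) (insert (m + 1) (DesSet (insertMax τ p))),
        q ^ invPrime (insertMax τ p) S =
      ∑ T ∈ powersetCard k ((insert m (DesSet τ)).erase p),
          q ^ (invPrime τ T + #(Ioc (p : ℕ) m \ T)) +
        ∑ T ∈ powersetCard (k + 1) ((insert m (DesSet τ)).erase p),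
          q ^ (invPrime τ T + #(Ioc (p : ℕ) m \ T)) := by
  have hsub : ∀ j, ∀ T ∈ powersetCard j ((insert m (DesSet τ)).erase p), T ⊆ Icc 1 m :=
    fun j T hT => (mem_powersetCard.1 hT).1.trans
      ((erase_subset _ _).trans (insert_DesSet_subset_Icc τ hm))
  rw [insert_DesSet_insertMax τ p hm, sum_powersetCard_succ_insert (succ_notMem_map_shiftUp _),
    powersetCard_map, powersetCard_map, sum_map, sum_map]
  congr 1 <;> refine sum_congr rfl fun T hT => ?_
  · exact congrArg (q ^ ·) (invPrime_insertMax_insert_map τ p (hsub k T hT))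
  · exact congrArg (q ^ ·) (invPrime_insertMax_map τ p (hsub (k + 1) T hT))

lemma sum_perm_sum_fin_powersetCard_erase (hm : 1 ≤ m) (j : ℕ) :
    ∑ τ : Equiv.Perm (Fin m), ∑ p : Fin (m + 1),
        ∑ T ∈ powersetCard j ((insert m (DesSet τ)).erase p),
          q ^ (invPrime τ T + #(Ioc (p : ℕ) m \ T)) =
      qnum q (m + 1 - j) * Dinv' q m j := by
  rw [Dinv'_eq_sum_invPrime, mul_sum]
  refine sum_congr rfl fun τ _ => sum_fin_sum_powersetCard_erase q ?_ (invPrime τ)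
  intro i hi
  have := mem_Icc.1 (insert_DesSet_subset_Icc τ hm hi)
  exact mem_range.2 (by omega)

lemma Dinv'_succ_zero (hm : 1 ≤ m) : Dinv' q (m + 1) 0 = qnum q (m + 1) * Dinv' q m 0 := by
  rw [Dinv'_succ_eq_sum_insertMax]
  refine (sum_congr rfl fun τ _ => sum_congr rfl fun p _ => ?_).trans
    (sum_perm_sum_fin_powersetCard_erase q hm 0)
  simp only [powersetCard_zero, sum_singleton]
  rw [← invPrime_insertMax_map τ p (empty_subset _), map_empty]

lemma Dinv'_succ_succ (hm : 1 ≤ m) (k : ℕ) :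
    Dinv' q (m + 1) (k + 1) =
      qnum q (m + 1 - k) * Dinv' q m k + qnum q (m - k) * Dinv' q m (k + 1) := by
  simp_rw [Dinv'_succ_eq_sum_insertMax, sum_powersetCard_insertMax_succ q hm, sum_add_distrib,
    sum_perm_sum_fin_powersetCard_erase q hm, Nat.add_sub_add_right]

end recursion

/-- For all n ≥ 2 and 0 ≤ k ≤ n,
D'_{n,k}(q) = [n−k+1]_q · D'_{n−1,k−1}(q) + [n−k]_q · D'_{n−1,k}(q), with the conventions
D'_{m,−1}(q) = 0 and D'_{m,k}(q) = 0 for k > m. -/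
theorem statement18 {R : Type*} [CommRing R] (q : R) (n k : ℕ) (hn : 2 ≤ n) (hk : k ≤ n) :
    Dinv' q n k =
      qnum q (n - k + 1) * (if k = 0 then 0 else Dinv' q (n - 1) (k - 1)) +
        qnum q (n - k) * Dinv' q (n - 1) k := by
  obtain ⟨m, rfl⟩ : ∃ m, n = m + 1 := ⟨n - 1, by omega⟩
  have hm : 1 ≤ m := by omega
  rcases k with _ | k
  · simpa using Dinv'_succ_zero q hm
  · rw [Dinv'_succ_succ q hm k, if_neg k.succ_ne_zero, Nat.add_sub_cancel, Nat.add_sub_cancel,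
      Nat.add_sub_add_right, show m - k + 1 = m + 1 - k by omega]
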